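/- arXiv:2406.17527 — 8 statements merged into one kernel-verified Lean document; each statement's English description precedes it below -/
import Mathlib

section
/- Let δ > 0 and define y_δ : (0, π) → ℝ by y_δ(x) = 2·arctan(δ·tan(x/2)). Then for every x ∈ (0, π): y_δ(x) ∈ (0, π), y_δ is differentiable at x, and (d/dx) y_δ(x) · sin x = sin(y_δ(x)). Consequently the gradient (sin x, sin y) of the function v(x,y) = −(cos x + cos y) at the point (x, y_δ(x)) is tangent to the curve Γ(δ) = {(x, y_δ(x)) : x ∈ (0,π)}, i.e., v has vanishing normal derivative along Γ(δ). -/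
/-!
With `t = tan (x / 2)`, the half-angle formulas give `sin x = 2 t / (1 + t²)` and
`y = 2 arctan (δ t)` satisfies `sin y = 2 δ t / (1 + δ² t²)`, while the chain rule gives
`y' = δ (1 + t²) / (1 + δ² t²)`; multiplying out yields `y' sin x = sin y`.
-/

open Real Set

theorem sin_two_mul_arctan (u : ℝ) : sin (2 * arctan u) = 2 * u / (1 + u ^ 2) := by
  have hsqrt : √(1 + u ^ 2) * √(1 + u ^ 2) = 1 + u ^ 2 := mul_self_sqrt (by positivity)
  rw [sin_two_mul, sin_arctan, cos_arctan, mul_assoc, div_mul_div_comm, hsqrt]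
  ring

theorem two_mul_arctan_mem_Ioo {u : ℝ} (hu : 0 < u) : 2 * arctan u ∈ Ioo 0 π :=
  ⟨by simpa using arctan_pos.mpr hu, by linarith [arctan_lt_pi_div_two u]⟩

theorem tan_half_pos {x : ℝ} (hx : x ∈ Ioo 0 π) : 0 < tan (x / 2) :=
  tan_pos_of_pos_of_lt_pi_div_two (by linarith [hx.1]) (by linarith [hx.2])

theorem cos_half_pos {x : ℝ} (hx : x ∈ Ioo 0 π) : 0 < cos (x / 2) :=
  cos_pos_of_mem_Ioo ⟨by linarith [hx.1, pi_pos], by linarith [hx.2]⟩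

theorem hasDerivAt_two_mul_arctan_mul_tan_half (δ : ℝ) {x : ℝ} (hx : cos (x / 2) ≠ 0) :
    HasDerivAt (fun x => 2 * arctan (δ * tan (x / 2)))
      (δ / (1 + (δ * tan (x / 2)) ^ 2) / cos (x / 2) ^ 2) x := by
  have htan : HasDerivAt (fun x => tan (x / 2)) (1 / cos (x / 2) ^ 2 * (1 / 2)) x :=
    (Real.hasDerivAt_tan hx).comp (h := fun x => x / 2) x ((hasDerivAt_id' x).div_const 2)
  refine (((htan.const_mul δ).arctan).const_mul 2).congr_deriv ?_
  field_simp

theorem two_mul_arctan_mul_tan_half_deriv_mul_sin (δ : ℝ) {x : ℝ} (hx : cos (x / 2) ≠ 0) :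
    δ / (1 + (δ * tan (x / 2)) ^ 2) / cos (x / 2) ^ 2 * sin x =
      sin (2 * arctan (δ * tan (x / 2))) := by
  have hsin : sin x = 2 * sin (x / 2) * cos (x / 2) := by
    rw [← sin_two_mul]; ring_nf
  rw [sin_two_mul_arctan, hsin, tan_eq_sin_div_cos]
  field_simp

theorem stmt_5 (δ : ℝ) (hδ : 0 < δ) (y : ℝ → ℝ)
    (hy : ∀ x, y x = 2 * Real.arctan (δ * Real.tan (x / 2))) :
    ∀ x ∈ Set.Ioo 0 Real.pi,
      y x ∈ Set.Ioo 0 Real.pi ∧ DifferentiableAt ℝ y x ∧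
      deriv y x * Real.sin x = Real.sin (y x) ∧
      (Real.sin x, Real.sin (y x)) = Real.sin x • ((1 : ℝ), deriv y x) := by
  obtain rfl : y = fun x => 2 * arctan (δ * tan (x / 2)) := funext hy
  intro x hx
  have hcos := (cos_half_pos hx).ne'
  have hderiv := hasDerivAt_two_mul_arctan_mul_tan_half δ hcos
  have htangent := two_mul_arctan_mul_tan_half_deriv_mul_sin δ hcos
  rw [hderiv.deriv]
  refine ⟨two_mul_arctan_mem_Ioo (mul_pos hδ (tan_half_pos hx)), hderiv.differentiableAt,
    htangent, ?_⟩
  rw [← htangent, Prod.smul_mk, smul_eq_mul, smul_eq_mul, mul_one, mul_comm]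
end

section
/- Let x, y : ℝ → ℝ be differentiable functions satisfying x′(t) = −sin(x(t))·cos(2y(t)) and y′(t) = −2·cos(x(t))·sin(2y(t)) for all t ∈ ℝ (that is, (x, y) is an orbit of the gradient system X′ = ∇v for v(x,y) = cos x · cos 2y). Then for every t ∈ ℝ, sin(2·y(t)) · (sin(x(0)))⁴ = sin(2·y(0)) · (sin(x(t)))⁴. -/
/-!
Along an orbit, `sin (2 y)` and `sin⁴ x` both solve the linear equation `u' = g u` with the
same rate `g = -4 cos x cos 2y`. Each is therefore its initial value times `exp (∫₀ᵗ g)`, so their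
ratio is constant.
-/

open Real

theorem eq_mul_exp_integral_of_hasDerivAt {f g : ℝ → ℝ} (hg : Continuous g)
    (hf : ∀ t, HasDerivAt f (g t * f t) t) (t : ℝ) :
    f t = f 0 * exp (∫ s in (0 : ℝ)..t, g s) := by
  set G : ℝ → ℝ := fun t => ∫ s in (0 : ℝ)..t, g s
  have hG : ∀ t, HasDerivAt G (g t) t := fun t =>
    intervalIntegral.integral_hasDerivAt_right (hg.intervalIntegrable _ _)
      (hg.stronglyMeasurableAtFilter _ _) hg.continuousAt
  have hconst : ∀ t, HasDerivAt (fun t => f t * exp (-G t)) 0 t := fun t => by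
    refine ((hf t).fun_mul (hG t).fun_neg.exp).congr_deriv ?_
    ring
  have key := is_const_of_deriv_eq_zero (fun s => (hconst s).differentiableAt)
    (fun s => (hconst s).deriv) t 0
  simp only [G, intervalIntegral.integral_same, neg_zero, exp_zero, mul_one] at key
  rw [← key, mul_assoc, ← exp_add, neg_add_cancel, exp_zero, mul_one]

theorem mul_eq_mul_of_hasDerivAt_mul {u w g : ℝ → ℝ} (hg : Continuous g)
    (hu : ∀ t, HasDerivAt u (g t * u t) t) (hw : ∀ t, HasDerivAt w (g t * w t) t) (t : ℝ) :
    u t * w 0 = u 0 * w t := by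
  rw [eq_mul_exp_integral_of_hasDerivAt hg hu t, eq_mul_exp_integral_of_hasDerivAt hg hw t]
  ring

theorem stmt_6 (x y : ℝ → ℝ)
    (hx : ∀ t, HasDerivAt x (-(Real.sin (x t) * Real.cos (2 * y t))) t)
    (hy : ∀ t, HasDerivAt y (-(2 * Real.cos (x t) * Real.sin (2 * y t))) t) :
    ∀ t, Real.sin (2 * y t) * Real.sin (x 0) ^ 4 = Real.sin (2 * y 0) * Real.sin (x t) ^ 4 := by
  set g : ℝ → ℝ := fun t => -4 * cos (x t) * cos (2 * y t)
  have hg : Continuous g := by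
    have hxc : Continuous x := continuous_iff_continuousAt.2 fun t => (hx t).continuousAt
    have hyc : Continuous y := continuous_iff_continuousAt.2 fun t => (hy t).continuousAt
    fun_prop
  have hu : ∀ t, HasDerivAt (fun t => sin (2 * y t)) (g t * sin (2 * y t)) t := fun t => by
    refine ((hy t).const_mul 2).sin.congr_deriv ?_
    ring
  have hw : ∀ t, HasDerivAt (fun t => sin (x t) ^ 4) (g t * sin (x t) ^ 4) t := fun t => by
    refine ((hx t).sin.fun_pow 4).congr_deriv ?_
    norm_num only [Nat.cast_ofNat]
    ring
  exact mul_eq_mul_of_hasDerivAt_mul hg hu hw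
end

section
/- Let x, y : ℝ → ℝ be differentiable functions with x(t) ∈ (0, π) and y(t) ∈ (0, π) for all t, satisfying x′(t) = sin(x(t)) and y′(t) = sin(y(t)) for all t ∈ ℝ. Then for every t ∈ ℝ, tan(y(t)/2) · tan(x(0)/2) = tan(y(0)/2) · tan(x(t)/2). -/
/-!
Along a solution of `u' = sin u` the quantity `tan (u / 2)` satisfies the linear equation
`h' = h`, because `d/du tan (u / 2) = 1 / (2 cos² (u / 2))` and `sin u = 2 sin (u / 2) cos (u / 2)`.
Hence `tan (u t / 2) = eᵗ · tan (u 0 / 2)` for every solution in `(0, π)`, and the common factor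
`eᵗ` cancels from the two sides of the identity.
-/

open Real

theorem eq_exp_mul_of_hasDerivAt_self {h : ℝ → ℝ} (hh : ∀ t, HasDerivAt h (h t) t) (t : ℝ) :
    h t = exp t * h 0 := by
  have hderiv : ∀ s, HasDerivAt (fun s => exp (-s) * h s) 0 s := fun s =>
    (((hasDerivAt_neg s).exp).fun_mul (hh s)).congr_deriv (by ring)
  have hconst := is_const_of_deriv_eq_zero (fun s => (hderiv s).differentiableAt)
    (fun s => (hderiv s).deriv) t 0
  simp only [neg_zero, exp_zero, one_mul] at hconst
  rw [← hconst, ← mul_assoc, ← exp_add, add_neg_cancel, exp_zero, one_mul]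

theorem hasDerivAt_tan_half_comp {f : ℝ → ℝ} {t : ℝ} (hf : HasDerivAt f (sin (f t)) t)
    (hcos : cos (f t / 2) ≠ 0) :
    HasDerivAt (fun s => tan (f s / 2)) (tan (f t / 2)) t := by
  refine ((hasDerivAt_tan hcos).comp t (hf.div_const 2)).congr_deriv ?_
  rw [tan_eq_sin_div_cos, show f t = 2 * (f t / 2) by ring, sin_two_mul]
  field_simp

theorem tan_half_eq_exp_mul {f : ℝ → ℝ} (hfr : ∀ t, f t ∈ Set.Ioo 0 π)
    (hf : ∀ t, HasDerivAt f (sin (f t)) t) (t : ℝ) :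
    tan (f t / 2) = exp t * tan (f 0 / 2) := by
  refine eq_exp_mul_of_hasDerivAt_self (h := fun s => tan (f s / 2)) (fun s => ?_) t
  obtain ⟨hpos, hlt⟩ := hfr s
  exact hasDerivAt_tan_half_comp (hf s)
    (cos_pos_of_mem_Ioo ⟨by linarith [pi_pos], by linarith⟩).ne'

theorem stmt_7 (x y : ℝ → ℝ)
    (hxr : ∀ t, x t ∈ Set.Ioo 0 Real.pi) (hyr : ∀ t, y t ∈ Set.Ioo 0 Real.pi)
    (hx : ∀ t, HasDerivAt x (Real.sin (x t)) t)
    (hy : ∀ t, HasDerivAt y (Real.sin (y t)) t) :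
    ∀ t, Real.tan (y t / 2) * Real.tan (x 0 / 2) = Real.tan (y 0 / 2) * Real.tan (x t / 2) := by
  intro t
  rw [tan_half_eq_exp_mul hyr hy t, tan_half_eq_exp_mul hxr hx t]
  ring
end

section
/- Let d ≥ 1, let Ω, Ω′ ⊆ ℝᵈ be open sets, let k ∈ ℝ, and let Ψ : Ω → Ω′ be a bijection such that Ψ is C² on Ω, its inverse Ψ⁻¹ is C² on Ω′, and det DΨ(x) ≠ 0 for every x ∈ Ω, where DΨ(x) is the Jacobian matrix of Ψ at x. For y ∈ Ω′ define the matrix A(y) = (1/|det DΨ(Ψ⁻¹(y))|) · DΨ(Ψ⁻¹(y)) · DΨ(Ψ⁻¹(y))ᵀ and the scalar q(y) = 1/|det DΨ(Ψ⁻¹(y))|. Let v : ℝᵈ → ℝ be a C² function with Δv + k²v = 0 on Ω, and define u : Ω′ → ℝ by u = v ∘ Ψ⁻¹. Then u satisfies the divergence-form equation ∑ᵢ ∂ᵢ ( ∑ⱼ A(y)ᵢⱼ · ∂ⱼu(y) ) + k² · q(y) · u(y) = 0 for every y ∈ Ω′. -/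
open Matrix
/-- The Laplacian of a scalar function on `EuclideanSpace ℝ (Fin d)`:
the sum of its second partial derivatives. -/
noncomputable def lapl {d : ℕ} (u : EuclideanSpace ℝ (Fin d) → ℝ)
    (x : EuclideanSpace ℝ (Fin d)) : ℝ :=
  ∑ i, fderiv ℝ (fun y => fderiv ℝ u y (EuclideanSpace.single i 1)) x (EuclideanSpace.single i 1)

/-- The Jacobian matrix of a map `Ψ : ℝᵈ → ℝᵈ` at a point `x`:
`(jacMat Ψ x) i j = ∂ⱼ Ψᵢ (x)`. -/
noncomputable def jacMat {d : ℕ}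
    (Ψ : EuclideanSpace ℝ (Fin d) → EuclideanSpace ℝ (Fin d))
    (x : EuclideanSpace ℝ (Fin d)) : Matrix (Fin d) (Fin d) ℝ :=
  Matrix.of fun i j => fderiv ℝ (fun z => Ψ z i) x (EuclideanSpace.single j 1)

/-!
Write `B = DΨ⁻¹`, so that `DΨ ∘ Ψ⁻¹ = B⁻¹` and `∇u = Bᵀ (∇v ∘ Ψ⁻¹)`. Then the flux is
`A ∇u = |det B| B⁻¹ (∇v ∘ Ψ⁻¹) = ± adj B (∇v ∘ Ψ⁻¹)`, with a sign that is locally constant.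
By the Piola identity the columns of `adj B` are divergence free, hence
`div (adj B (∇v ∘ Ψ⁻¹)) = tr (adj B · (D²v ∘ Ψ⁻¹) · B) = det B · (Δv ∘ Ψ⁻¹)`,
and multiplying by the sign gives `|det B| (Δv ∘ Ψ⁻¹) = -k² q u`.
-/

open Equiv Filter Topology

theorem eventually_abs_eq_sign_mul {X : Type*} [TopologicalSpace X] {f : X → ℝ} {x : X}
    (hf : ContinuousAt f x) (hx : f x ≠ 0) : ∀ᶠ z in 𝓝 x, |f z| = SignType.sign (f x) * f z := by
  filter_upwards [(continuousAt_sign_of_ne_zero hx).comp hf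
    ((isOpen_discrete {SignType.sign (f x)}).mem_nhds rfl)] with z hz
  rw [← Set.mem_singleton_iff.mp hz, Function.comp_apply, sign_mul_self]

section Matrix

variable {n : Type*} [Fintype n] [DecidableEq n]

theorem adjugate_apply_eq_sum_perm {R : Type*} [CommRing R] (M : Matrix n n R) (i a : n) :
    adjugate M i a = ∑ σ : Perm n,
      if σ a = i then ((Perm.sign σ : ℤ) : R) * ∏ r ∈ Finset.univ.erase a, M r (σ r) else 0 := by
  rw [adjugate_apply, ← det_transpose, det_apply']
  refine Finset.sum_congr rfl fun σ _ => ?_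
  rw [← Finset.mul_prod_erase Finset.univ _ (Finset.mem_univ a)]
  have hrow : ∀ r ∈ Finset.univ.erase a, (M.updateRow a (Pi.single i 1))ᵀ (σ r) r = M r (σ r) :=
    fun r hr => by simp [updateRow_ne (Finset.ne_of_mem_erase hr)]
  rw [Finset.prod_congr rfl hrow]
  split_ifs with h <;> simp [h]

theorem Equiv.Perm.sum_eq_zero_of_mul_swap_eq_neg {M : Type*} [AddCommGroup M] {a c : n}
    (hac : a ≠ c) {f : Perm n → M} (hf : ∀ σ, f (σ * swap a c) = -f σ) : ∑ σ, f σ = 0 :=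
  Finset.sum_ninvolution (fun σ => σ * swap a c) (fun σ => by rw [hf, add_neg_cancel])
    (fun σ _ => by simpa [mul_eq_left, swap_eq_one_iff] using hac) (fun _ => Finset.mem_univ _)
    (fun σ => by simp [mul_assoc])

variable {𝕜 F : Type*} [NontriviallyNormedField 𝕜] [NormedAddCommGroup F] [NormedSpace 𝕜 F]
  {M : F → Matrix n n 𝕜} {y : F}

theorem differentiableAt_det (h : ∀ i j, DifferentiableAt 𝕜 (fun z => M z i j) y) :
    DifferentiableAt 𝕜 (fun z => (M z).det) y := by
  simp only [det_apply']
  fun_prop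

theorem differentiableAt_adjugate_apply (h : ∀ i j, DifferentiableAt 𝕜 (fun z => M z i j) y)
    (i j : n) : DifferentiableAt 𝕜 (fun z => adjugate (M z) i j) y := by
  simp only [adjugate_apply]
  refine differentiableAt_det fun r s => ?_
  by_cases hr : r = j
  · simp [hr]
  · simpa [updateRow_ne hr] using h r s

theorem trace_adjugate_mul_mul {R : Type*} [CommRing R] (J K : Matrix n n R) :
    trace (adjugate J * (K * J)) = J.det * trace K := by
  rw [trace_mul_comm, mul_assoc, mul_adjugate, Matrix.mul_smul, mul_one, trace_smul, smul_eq_mul]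

theorem adjugate_eq_det_smul_of_mul_eq_one {R : Type*} [CommRing R] {J B : Matrix n n R}
    (h : J * B = 1) : adjugate B = B.det • J := by
  calc adjugate B = J * B * adjugate B := by rw [h, one_mul]
    _ = B.det • J := by rw [mul_assoc, mul_adjugate, Matrix.mul_smul, mul_one]

variable {K : Type*} [Field K] [LinearOrder K] [IsStrictOrderedRing K]

theorem abs_det_inv_of_mul_eq_one {J B : Matrix n n K} (h : J * B = 1) :
    |J.det|⁻¹ = |B.det| := by
  have hdet : J.det * B.det = 1 := by rw [← det_mul, h, det_one]
  rw [eq_inv_of_mul_eq_one_right hdet, abs_inv]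

theorem abs_det_inv_smul_mul_transpose_mulVec {J B : Matrix n n K} (h : J * B = 1) (g : n → K) :
    (|J.det|⁻¹ • (J * Jᵀ)) *ᵥ (g ᵥ* B) = |B.det| • (J *ᵥ g) := by
  rw [smul_mulVec, ← mulVec_transpose, mulVec_mulVec, mul_assoc, ← transpose_mul,
    mul_eq_one_comm.mp h, transpose_one, mul_one, abs_det_inv_of_mul_eq_one h]

end Matrix

namespace EuclideanCalculus

variable {d : ℕ}

local notation "E" => EuclideanSpace ℝ (Fin d)

noncomputable def partialDeriv (i : Fin d) (f : E → ℝ) (y : E) : ℝ :=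
  fderiv ℝ f y (EuclideanSpace.single i 1)

noncomputable def grad (f : E → ℝ) (y : E) : Fin d → ℝ :=
  fun j => partialDeriv j f y

noncomputable def divergence (F : E → Fin d → ℝ) (y : E) : ℝ :=
  ∑ i, partialDeriv i (fun z => F z i) y

theorem lapl_eq_divergence_grad (v : E → ℝ) (x : E) : lapl v x = divergence (grad v) x := rfl

theorem jacMat_apply (Φ : E → E) (y : E) (i j : Fin d) :
    jacMat Φ y i j = partialDeriv j (fun z => Φ z i) y := rfl

theorem partialDeriv_congr {f g : E → ℝ} {y : E} (h : f =ᶠ[𝓝 y] g) (i : Fin d) :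
    partialDeriv i f y = partialDeriv i g y := by
  rw [partialDeriv, partialDeriv, h.fderiv_eq]

theorem partialDeriv_comp {f : E → ℝ} {g : E → E} {y : E}
    (hf : DifferentiableAt ℝ f (g y)) (hg : DifferentiableAt ℝ g y) (i : Fin d) :
    partialDeriv i (fun z => f (g z)) y = ∑ j, partialDeriv j f (g y) * jacMat g y j i := by
  have hgj : ∀ j, jacMat g y j i = fderiv ℝ g y (EuclideanSpace.single i 1) j := fun j =>
    congrArg (· (EuclideanSpace.single i 1))
      (((EuclideanSpace.proj j : E →L[ℝ] ℝ).hasFDerivAt.comp y hg.hasFDerivAt).fderiv)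
  rw [partialDeriv, show (fun z => f (g z)) = f ∘ g from rfl, fderiv_comp y hf hg]
  simp only [ContinuousLinearMap.comp_apply, hgj]
  conv_lhs => rw [← (EuclideanSpace.basisFun (Fin d) ℝ).sum_repr (fderiv ℝ g y _)]
  simp [partialDeriv, mul_comm]

theorem grad_comp {f : E → ℝ} {g : E → E} {y : E}
    (hf : DifferentiableAt ℝ f (g y)) (hg : DifferentiableAt ℝ g y) :
    grad (fun z => f (g z)) y = grad f (g y) ᵥ* jacMat g y := by
  ext i
  simp only [grad, partialDeriv_comp hf hg, vecMul, dotProduct]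

theorem jacMat_comp {f g : E → E} {y : E} (hf : DifferentiableAt ℝ f (g y))
    (hg : DifferentiableAt ℝ g y) :
    jacMat (fun z => f (g z)) y = jacMat f (g y) * jacMat g y := by
  ext i j
  exact partialDeriv_comp ((EuclideanSpace.proj i).differentiableAt.comp _ hf) hg j

theorem jacMat_eq_one_of_eventuallyEq_id {Φ : E → E} {y : E} (h : Φ =ᶠ[𝓝 y] id) :
    jacMat Φ y = 1 := by
  ext i j
  rw [jacMat_apply, partialDeriv_congr (g := fun z => z i) (h.mono fun _ hz => by rw [hz]; rfl) j,
    partialDeriv, show fderiv ℝ (fun z : E => z i) y = EuclideanSpace.proj i from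
      (EuclideanSpace.proj i : E →L[ℝ] ℝ).hasFDerivAt.fderiv]
  simp [one_apply]

theorem partialDeriv_sum {ι : Type*} (t : Finset ι) {F : ι → E → ℝ} {y : E}
    (h : ∀ r ∈ t, DifferentiableAt ℝ (F r) y) (i : Fin d) :
    partialDeriv i (fun z => ∑ r ∈ t, F r z) y = ∑ r ∈ t, partialDeriv i (F r) y := by
  simp [partialDeriv, fderiv_fun_sum h]

theorem partialDeriv_const_mul (f : E → ℝ) (y : E) (c : ℝ) (i : Fin d) :
    partialDeriv i (fun z => c * f z) y = c * partialDeriv i f y := by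
  show fderiv ℝ (c • f) y _ = _
  rw [fderiv_const_smul_field]
  rfl

theorem partialDeriv_mul {f g : E → ℝ} {y : E} (hf : DifferentiableAt ℝ f y)
    (hg : DifferentiableAt ℝ g y) (i : Fin d) :
    partialDeriv i (fun z => f z * g z) y
      = f y * partialDeriv i g y + partialDeriv i f y * g y := by
  simp [partialDeriv, fderiv_fun_mul hf hg, mul_comm]

theorem partialDeriv_finsetProd {ι : Type*} [DecidableEq ι] (t : Finset ι) {g : ι → E → ℝ}
    {y : E} (h : ∀ r ∈ t, DifferentiableAt ℝ (g r) y) (i : Fin d) :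
    partialDeriv i (fun z => ∏ r ∈ t, g r z) y
      = ∑ r ∈ t, (∏ s ∈ t.erase r, g s y) * partialDeriv i (g r) y := by
  simp [partialDeriv, fderiv_finsetProd h]

theorem contDiffAt_partialDeriv {m n : WithTop ℕ∞} {f : E → ℝ} {y : E} (hf : ContDiffAt ℝ n f y)
    (hmn : m + 1 ≤ n) (j : Fin d) : ContDiffAt ℝ m (partialDeriv j f) y :=
  (hf.fderiv_right hmn).clm_apply contDiffAt_const

theorem partialDeriv_partialDeriv_comm {f : E → ℝ} {x : E} (hf : ContDiffAt ℝ 2 f x)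
    (i j : Fin d) : partialDeriv i (partialDeriv j f) x = partialDeriv j (partialDeriv i f) x := by
  have hD : DifferentiableAt ℝ (fderiv ℝ f) x :=
    (hf.fderiv_right (m := 1) (by norm_num)).differentiableAt one_ne_zero
  have second : ∀ a b : Fin d, partialDeriv a (partialDeriv b f) x =
      fderiv ℝ (fderiv ℝ f) x (EuclideanSpace.single a 1) (EuclideanSpace.single b 1) := by
    intro a b
    show fderiv ℝ (fun y => fderiv ℝ f y (EuclideanSpace.single b 1)) x _ = _
    rw [fderiv_clm_apply hD (differentiableAt_const _)]
    simp
  rw [second, second, (hf.isSymmSndFDerivAt (by simp)).eq]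

variable {Φ : EuclideanSpace ℝ (Fin d) → EuclideanSpace ℝ (Fin d)} {y : EuclideanSpace ℝ (Fin d)}

theorem differentiableAt_jacMat_apply (hΦ : ContDiffAt ℝ 2 Φ y) (r s : Fin d) :
    DifferentiableAt ℝ (fun z => jacMat Φ z r s) y :=
  (contDiffAt_partialDeriv ((contDiffAt_piLp 2).1 hΦ r) le_rfl s).differentiableAt one_ne_zero

/-- Swapping `a` and `c` in `σ` flips the sign of `σ` and exchanges the two directions of the
mixed second derivative `∂_{σ a} ∂_{σ c} Φ_c`, which is symmetric. -/
theorem sum_perm_sign_mul_prod_mul_partialDeriv_jacMat_eq_zero (hΦ : ContDiffAt ℝ 2 Φ y)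
    {a c : Fin d} (hca : c ≠ a) :
    ∑ σ : Perm (Fin d), ((Perm.sign σ : ℤ) : ℝ) *
      ((∏ s ∈ (Finset.univ.erase a).erase c, jacMat Φ y s (σ s)) *
        partialDeriv (σ a) (fun z => jacMat Φ z c (σ c)) y) = 0 := by
  refine Perm.sum_eq_zero_of_mul_swap_eq_neg hca.symm fun σ => ?_
  have hprod : ∏ s ∈ (Finset.univ.erase a).erase c, jacMat Φ y s ((σ * swap a c) s)
      = ∏ s ∈ (Finset.univ.erase a).erase c, jacMat Φ y s (σ s) := by
    refine Finset.prod_congr rfl fun s hs => ?_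
    rw [Perm.mul_apply, swap_apply_of_ne_of_ne (Finset.ne_of_mem_erase (Finset.mem_of_mem_erase hs))
      (Finset.ne_of_mem_erase hs)]
  have hsymm := partialDeriv_partialDeriv_comm ((contDiffAt_piLp 2).1 hΦ c) (σ c) (σ a)
  rw [hprod]
  simp only [jacMat_apply] at hsymm ⊢
  simp [Perm.sign_mul, Perm.sign_swap hca.symm, hsymm]

/-- The Piola identity. -/
theorem divergence_adjugate_jacMat_column_eq_zero (hΦ : ContDiffAt ℝ 2 Φ y) (a : Fin d) :
    divergence (fun z i => adjugate (jacMat Φ z) i a) y = 0 := by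
  have hP : ∀ σ : Perm (Fin d),
      DifferentiableAt ℝ (fun z => ∏ r ∈ Finset.univ.erase a, jacMat Φ z r (σ r)) y := fun σ =>
    (HasFDerivAt.finsetProd fun r _ =>
      (differentiableAt_jacMat_apply hΦ r (σ r)).hasFDerivAt).differentiableAt
  have hterm : ∀ i (σ : Perm (Fin d)), DifferentiableAt ℝ (fun z => if σ a = i then
      ((Perm.sign σ : ℤ) : ℝ) * ∏ r ∈ Finset.univ.erase a, jacMat Φ z r (σ r) else 0) y := by
    intro i σ
    split_ifs
    exacts [(hP σ).const_mul _, differentiableAt_const 0]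
  simp only [divergence, adjugate_apply_eq_sum_perm]
  calc ∑ i, partialDeriv i (fun z => ∑ σ : Perm (Fin d), if σ a = i then
        ((Perm.sign σ : ℤ) : ℝ) * ∏ r ∈ Finset.univ.erase a, jacMat Φ z r (σ r) else 0) y
      = ∑ i, ∑ σ : Perm (Fin d), if σ a = i then ((Perm.sign σ : ℤ) : ℝ) *
          partialDeriv i (fun z => ∏ r ∈ Finset.univ.erase a, jacMat Φ z r (σ r)) y else 0 := by
        refine Finset.sum_congr rfl fun i _ => ?_
        rw [partialDeriv_sum _ fun σ _ => hterm i σ]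
        refine Finset.sum_congr rfl fun σ _ => ?_
        split_ifs
        exacts [partialDeriv_const_mul _ y _ i, by simp [partialDeriv]]
    _ = ∑ σ : Perm (Fin d), ∑ c ∈ Finset.univ.erase a, ((Perm.sign σ : ℤ) : ℝ) *
          ((∏ s ∈ (Finset.univ.erase a).erase c, jacMat Φ y s (σ s)) *
            partialDeriv (σ a) (fun z => jacMat Φ z c (σ c)) y) := by
        rw [Finset.sum_comm]
        refine Finset.sum_congr rfl fun σ _ => ?_
        rw [Finset.sum_ite_eq, if_pos (Finset.mem_univ _), partialDeriv_finsetProd _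
          (fun r _ => differentiableAt_jacMat_apply hΦ r (σ r)), Finset.mul_sum]
    _ = 0 := by
        rw [Finset.sum_comm]
        exact Finset.sum_eq_zero fun c hc =>
          sum_perm_sign_mul_prod_mul_partialDeriv_jacMat_eq_zero hΦ (Finset.ne_of_mem_erase hc)

theorem divergence_const_smul (F : E → Fin d → ℝ) (c : ℝ) :
    divergence (fun z => c • F z) y = c * divergence F y := by
  simp only [divergence, Pi.smul_apply, smul_eq_mul, partialDeriv_const_mul, Finset.mul_sum]

theorem divergence_congr {F G : E → Fin d → ℝ} (h : F =ᶠ[𝓝 y] G) :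
    divergence F y = divergence G y :=
  Finset.sum_congr rfl fun i _ => partialDeriv_congr (h.mono fun _ hz => congrFun hz i) i

theorem divergence_mulVec {M : E → Matrix (Fin d) (Fin d) ℝ}
    {w : E → Fin d → ℝ} (hM : ∀ i a, DifferentiableAt ℝ (fun z => M z i a) y)
    (hw : ∀ a, DifferentiableAt ℝ (fun z => w z a) y) :
    divergence (fun z => M z *ᵥ w z) y
      = ∑ a, divergence (fun z i => M z i a) y * w y a
        + ∑ i, ∑ a, M y i a * partialDeriv i (fun z => w z a) y := by
  have hrow : ∀ i, partialDeriv i (fun z => ∑ a, M z i a * w z a) y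
      = ∑ a, (M y i a * partialDeriv i (fun z => w z a) y
        + partialDeriv i (fun z => M z i a) y * w y a) := fun i => by
    rw [partialDeriv_sum _ fun a _ => (hM i a).fun_mul (hw a)]
    exact Finset.sum_congr rfl fun a _ => partialDeriv_mul (hM i a) (hw a) i
  simp only [divergence, mulVec, dotProduct, hrow, Finset.sum_add_distrib, Finset.sum_mul]
  rw [add_comm, Finset.sum_comm]

theorem divergence_adjugate_jacMat_mulVec_grad_comp {v : E → ℝ}
    (hΦ : ContDiffAt ℝ 2 Φ y) (hv : ContDiffAt ℝ 2 v (Φ y)) :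
    divergence (fun z => adjugate (jacMat Φ z) *ᵥ grad v (Φ z)) y
      = (jacMat Φ y).det * lapl v (Φ y) := by
  have hΦy : DifferentiableAt ℝ Φ y := hΦ.differentiableAt two_ne_zero
  have hvy : ∀ a, DifferentiableAt ℝ (partialDeriv a v) (Φ y) := fun a =>
    (contDiffAt_partialDeriv hv le_rfl a).differentiableAt one_ne_zero
  have hchain : ∀ i a, partialDeriv i (fun z => grad v (Φ z) a) y
      = ∑ b, partialDeriv b (partialDeriv a v) (Φ y) * jacMat Φ y b i := fun i a =>
    partialDeriv_comp (hvy a) hΦy i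
  rw [divergence_mulVec (w := fun z => grad v (Φ z))
    (differentiableAt_adjugate_apply (differentiableAt_jacMat_apply hΦ))
    fun a => (hvy a).comp y hΦy]
  simp only [divergence_adjugate_jacMat_column_eq_zero hΦ, zero_mul, Finset.sum_const_zero,
    zero_add, hchain]
  have := trace_adjugate_mul_mul (jacMat Φ y)
    (Matrix.of fun a b => partialDeriv b (partialDeriv a v) (Φ y))
  simpa [trace, mul_apply, lapl_eq_divergence_grad, divergence, grad, Finset.mul_sum] using this

end EuclideanCalculus

open EuclideanCalculus

theorem stmt_8_general {d : ℕ} (Ω Ω' : Set (EuclideanSpace ℝ (Fin d)))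
    (hΩ : IsOpen Ω) (hΩ' : IsOpen Ω') (k : ℝ)
    (Ψ Ψinv : EuclideanSpace ℝ (Fin d) → EuclideanSpace ℝ (Fin d))
    (hbij : Set.BijOn Ψ Ω Ω')
    (hinv1 : ∀ x ∈ Ω, Ψinv (Ψ x) = x) (hinv2 : ∀ y ∈ Ω', Ψ (Ψinv y) = y)
    (hΨ : ContDiffOn ℝ 2 Ψ Ω) (hΨinv : ContDiffOn ℝ 2 Ψinv Ω')
    (A : EuclideanSpace ℝ (Fin d) → Matrix (Fin d) (Fin d) ℝ)
    (hA : ∀ y ∈ Ω',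
      A y = |(jacMat Ψ (Ψinv y)).det|⁻¹ • (jacMat Ψ (Ψinv y) * (jacMat Ψ (Ψinv y))ᵀ))
    (q : EuclideanSpace ℝ (Fin d) → ℝ)
    (hq : ∀ y ∈ Ω', q y = |(jacMat Ψ (Ψinv y)).det|⁻¹)
    (v : EuclideanSpace ℝ (Fin d) → ℝ) (hv : ContDiff ℝ 2 v)
    (hveq : ∀ x ∈ Ω, lapl v x + k ^ 2 * v x = 0)
    (u : EuclideanSpace ℝ (Fin d) → ℝ) (hu : ∀ y, u y = v (Ψinv y)) :
    ∀ y ∈ Ω',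
      (∑ i, fderiv ℝ
          (fun z => ∑ j, A z i j * fderiv ℝ u z (EuclideanSpace.single j 1))
          y (EuclideanSpace.single i 1)) + k ^ 2 * q y * u y = 0 := by
  intro y₀ hy₀
  have hmaps : ∀ y ∈ Ω', Ψinv y ∈ Ω := fun y hy => by
    obtain ⟨x, hx, rfl⟩ := hbij.surjOn hy
    rwa [hinv1 x hx]
  have hΨinv' : ∀ y ∈ Ω', ContDiffAt ℝ 2 Ψinv y := fun y hy => hΨinv.contDiffAt (hΩ'.mem_nhds hy)
  have hJB : ∀ y ∈ Ω', jacMat Ψ (Ψinv y) * jacMat Ψinv y = 1 := fun y hy => by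
    rw [← jacMat_comp ((hΨ.contDiffAt (hΩ.mem_nhds (hmaps y hy))).differentiableAt two_ne_zero)
      ((hΨinv' y hy).differentiableAt two_ne_zero)]
    exact jacMat_eq_one_of_eventuallyEq_id (eventually_of_mem (hΩ'.mem_nhds hy) hinv2)
  have hdet : (jacMat Ψinv y₀).det ≠ 0 := by
    intro h0
    simpa [h0] using congrArg det (hJB y₀ hy₀)
  set s : ℝ := (SignType.sign (jacMat Ψinv y₀).det : ℝ)
  -- `det B` has locally constant sign, so `|det B|` can be differentiated as `s * det B`.
  have habs := eventually_abs_eq_sign_mul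
    (differentiableAt_det (differentiableAt_jacMat_apply (hΨinv' y₀ hy₀))).continuousAt hdet
  have hflux : (fun z => A z *ᵥ grad u z)
      =ᶠ[𝓝 y₀] fun z => s • (adjugate (jacMat Ψinv z) *ᵥ grad v (Ψinv z)) := by
    filter_upwards [hΩ'.mem_nhds hy₀, habs] with y hy hsy
    rw [show u = fun z => v (Ψinv z) from funext hu, grad_comp (hv.differentiable two_ne_zero _)
      ((hΨinv' y hy).differentiableAt two_ne_zero), hA y hy,
      abs_det_inv_smul_mul_transpose_mulVec (hJB y hy), hsy,
      adjugate_eq_det_smul_of_mul_eq_one (hJB y hy), smul_mulVec, smul_smul]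
  show divergence (fun z => A z *ᵥ grad u z) y₀ + k ^ 2 * q y₀ * u y₀ = 0
  rw [divergence_congr hflux, divergence_const_smul,
    divergence_adjugate_jacMat_mulVec_grad_comp (hΨinv' y₀ hy₀) hv.contDiffAt,
    hq y₀ hy₀, hu y₀, abs_det_inv_of_mul_eq_one (hJB y₀ hy₀), habs.self_of_nhds]
  linear_combination (s * (jacMat Ψinv y₀).det) * hveq _ (hmaps y₀ hy₀)

theorem stmt_8 {d : ℕ} (hd : 1 ≤ d) (Ω Ω' : Set (EuclideanSpace ℝ (Fin d)))
    (hΩ : IsOpen Ω) (hΩ' : IsOpen Ω') (k : ℝ)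
    (Ψ Ψinv : EuclideanSpace ℝ (Fin d) → EuclideanSpace ℝ (Fin d))
    (hbij : Set.BijOn Ψ Ω Ω')
    (hinv1 : ∀ x ∈ Ω, Ψinv (Ψ x) = x) (hinv2 : ∀ y ∈ Ω', Ψ (Ψinv y) = y)
    (hΨ : ContDiffOn ℝ 2 Ψ Ω) (hΨinv : ContDiffOn ℝ 2 Ψinv Ω')
    (hdet : ∀ x ∈ Ω, (jacMat Ψ x).det ≠ 0)
    (A : EuclideanSpace ℝ (Fin d) → Matrix (Fin d) (Fin d) ℝ)
    (hA : ∀ y ∈ Ω',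
      A y = |(jacMat Ψ (Ψinv y)).det|⁻¹ • (jacMat Ψ (Ψinv y) * (jacMat Ψ (Ψinv y))ᵀ))
    (q : EuclideanSpace ℝ (Fin d) → ℝ)
    (hq : ∀ y ∈ Ω', q y = |(jacMat Ψ (Ψinv y)).det|⁻¹)
    (v : EuclideanSpace ℝ (Fin d) → ℝ) (hv : ContDiff ℝ 2 v)
    (hveq : ∀ x ∈ Ω, lapl v x + k ^ 2 * v x = 0)
    (u : EuclideanSpace ℝ (Fin d) → ℝ) (hu : ∀ y, u y = v (Ψinv y)) :
    ∀ y ∈ Ω',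
      (∑ i, fderiv ℝ
          (fun z => ∑ j, A z i j * fderiv ℝ u z (EuclideanSpace.single j 1))
          y (EuclideanSpace.single i 1)) + k ^ 2 * q y * u y = 0 :=
  stmt_8_general Ω Ω' hΩ hΩ' k Ψ Ψinv hbij hinv1 hinv2 hΨ hΨinv A hA q hq v hv hveq u hu
end

section
/- Let a₁, a₂, q₀ be positive reals and let m, n be natural numbers, not both zero, such that m²·(q₀ − a₁) = n²·(a₂ − q₀). Let κ be a positive natural number, set k² = κ²(m² + n²), and define u : ℝ² → ℝ by u(x, y) = cos(κ m x)·cos(κ n y). Then: (i) a₁·∂²u/∂x² + a₂·∂²u/∂y² + k²·q₀·u = 0 at every point of ℝ²; (ii) ∂²u/∂x² + ∂²u/∂y² + k²·u = 0 at every point of ℝ²; (iii) ∂u/∂x(x,y) = 0 whenever x ∈ {0, π}, and ∂u/∂y(x,y) = 0 whenever y ∈ {0, π}. -/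
/-!
The function `u(x, y) = cos (α x) cos (β y)` with `α = κ m`, `β = κ n` separates variables, so
`∂ₓ²u = -α² u` and `∂ᵧ²u = -β² u`. Both Helmholtz equations are then polynomial identities in
`α, β`; the anisotropic one is exactly where `m² (q₀ - a₁) = n² (a₂ - q₀)` enters. On the edges
`x ∈ {0, π}` the factor `sin (κ m x)` of `∂ₓu` vanishes, and likewise for `∂ᵧu`.
-/

/-- Partial derivative in the first coordinate direction on `ℝ²`. -/
noncomputable def dX (u : ℝ × ℝ → ℝ) (p : ℝ × ℝ) : ℝ := fderiv ℝ u p (1, 0)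

/-- Partial derivative in the second coordinate direction on `ℝ²`. -/
noncomputable def dY (u : ℝ × ℝ → ℝ) (p : ℝ × ℝ) : ℝ := fderiv ℝ u p (0, 1)

open Real

section Separable

variable {f g : ℝ → ℝ}

theorem hasFDerivAt_mul_fst_snd {f' g' : ℝ} {p : ℝ × ℝ}
    (hf : HasDerivAt f f' p.1) (hg : HasDerivAt g g' p.2) :
    HasFDerivAt (fun q : ℝ × ℝ => f q.1 * g q.2)
      (f p.1 • (ContinuousLinearMap.snd ℝ ℝ ℝ).smulRight g' +
        g p.2 • (ContinuousLinearMap.fst ℝ ℝ ℝ).smulRight f') p :=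
  (hf.hasFDerivAt.comp p hasFDerivAt_fst).mul (hg.hasFDerivAt.comp p hasFDerivAt_snd)

theorem dX_mul_fst_snd (hf : Differentiable ℝ f) (hg : Differentiable ℝ g) :
    dX (fun q => f q.1 * g q.2) = fun q => deriv f q.1 * g q.2 := by
  funext p
  rw [dX, (hasFDerivAt_mul_fst_snd (hf p.1).hasDerivAt (hg p.2).hasDerivAt).fderiv]
  simp [mul_comm]

theorem dY_mul_fst_snd (hf : Differentiable ℝ f) (hg : Differentiable ℝ g) :
    dY (fun q => f q.1 * g q.2) = fun q => f q.1 * deriv g q.2 := by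
  funext p
  rw [dY, (hasFDerivAt_mul_fst_snd (hf p.1).hasDerivAt (hg p.2).hasDerivAt).fderiv]
  simp [mul_comm]

end Separable

theorem deriv_cos_const_mul (a : ℝ) :
    deriv (fun t => cos (a * t)) = fun t => -(a * sin (a * t)) := by
  funext t
  simpa [mul_comm] using (((hasDerivAt_id t).const_mul a).cos).deriv

theorem deriv_sin_const_mul (a : ℝ) :
    deriv (fun t => sin (a * t)) = fun t => a * cos (a * t) := by
  funext t
  simpa [mul_comm] using (((hasDerivAt_id t).const_mul a).sin).deriv

theorem sin_natCast_mul_natCast_mul_pi (k m : ℕ) : sin ((k : ℝ) * m * π) = 0 := by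
  exact_mod_cast sin_nat_mul_pi (k * m)

section CosProduct

variable (α β : ℝ)

theorem dX_cos_mul_cos :
    dX (fun q => cos (α * q.1) * cos (β * q.2)) = fun q => -(α * sin (α * q.1)) * cos (β * q.2) := by
  rw [dX_mul_fst_snd (f := fun t => cos (α * t)) (g := fun t => cos (β * t)) (by fun_prop)
    (by fun_prop), deriv_cos_const_mul]

theorem dY_cos_mul_cos :
    dY (fun q => cos (α * q.1) * cos (β * q.2)) = fun q => cos (α * q.1) * -(β * sin (β * q.2)) := by
  rw [dY_mul_fst_snd (f := fun t => cos (α * t)) (g := fun t => cos (β * t)) (by fun_prop)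
    (by fun_prop), deriv_cos_const_mul]

theorem dX_dX_cos_mul_cos :
    dX (dX fun q => cos (α * q.1) * cos (β * q.2)) =
      fun q => -α ^ 2 * (cos (α * q.1) * cos (β * q.2)) := by
  rw [dX_cos_mul_cos, dX_mul_fst_snd (f := fun t => -(α * sin (α * t)))
    (g := fun t => cos (β * t)) (by fun_prop) (by fun_prop)]
  funext q
  simp only [deriv.fun_neg, deriv_const_mul_field', deriv_sin_const_mul]
  ring

theorem dY_dY_cos_mul_cos :
    dY (dY fun q => cos (α * q.1) * cos (β * q.2)) =
      fun q => -β ^ 2 * (cos (α * q.1) * cos (β * q.2)) := by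
  rw [dY_cos_mul_cos, dY_mul_fst_snd (f := fun t => cos (α * t))
    (g := fun t => -(β * sin (β * t))) (by fun_prop) (by fun_prop)]
  funext q
  simp only [deriv.fun_neg, deriv_const_mul_field', deriv_sin_const_mul]
  ring

end CosProduct

theorem stmt_12_general (a₁ a₂ q₀ : ℝ)
    (m n : ℕ)
    (hrel : (m : ℝ) ^ 2 * (q₀ - a₁) = (n : ℝ) ^ 2 * (a₂ - q₀))
    (κ : ℕ) (k2 : ℝ)
    (hk2 : k2 = (κ : ℝ) ^ 2 * ((m : ℝ) ^ 2 + (n : ℝ) ^ 2))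
    (u : ℝ × ℝ → ℝ)
    (hu : ∀ p : ℝ × ℝ,
      u p = Real.cos ((κ : ℝ) * (m : ℝ) * p.1) * Real.cos ((κ : ℝ) * (n : ℝ) * p.2)) :
    (∀ p : ℝ × ℝ, a₁ * dX (dX u) p + a₂ * dY (dY u) p + k2 * q₀ * u p = 0) ∧
    (∀ p : ℝ × ℝ, dX (dX u) p + dY (dY u) p + k2 * u p = 0) ∧
    (∀ p : ℝ × ℝ, (p.1 = 0 ∨ p.1 = Real.pi) → dX u p = 0) ∧
    (∀ p : ℝ × ℝ, (p.2 = 0 ∨ p.2 = Real.pi) → dY u p = 0) := by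
  obtain rfl : u = fun q => cos (κ * m * q.1) * cos (κ * n * q.2) := funext hu
  refine ⟨fun p => ?_, fun p => ?_, fun p hp => ?_, fun p hp => ?_⟩
  · rw [dX_dX_cos_mul_cos, dY_dY_cos_mul_cos, hk2]
    linear_combination (κ : ℝ) ^ 2 * (cos (κ * m * p.1) * cos (κ * n * p.2)) * hrel
  · rw [dX_dX_cos_mul_cos, dY_dY_cos_mul_cos, hk2]
    ring
  · rcases hp with h | h <;>
      simp [dX_cos_mul_cos, h, sin_natCast_mul_natCast_mul_pi]
  · rcases hp with h | h <;>
      simp [dY_cos_mul_cos, h, sin_natCast_mul_natCast_mul_pi]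

theorem stmt_12 (a₁ a₂ q₀ : ℝ) (ha₁ : 0 < a₁) (ha₂ : 0 < a₂) (hq₀ : 0 < q₀)
    (m n : ℕ) (hmn : ¬(m = 0 ∧ n = 0))
    (hrel : (m : ℝ) ^ 2 * (q₀ - a₁) = (n : ℝ) ^ 2 * (a₂ - q₀))
    (κ : ℕ) (hκ : 0 < κ) (k2 : ℝ)
    (hk2 : k2 = (κ : ℝ) ^ 2 * ((m : ℝ) ^ 2 + (n : ℝ) ^ 2))
    (u : ℝ × ℝ → ℝ)
    (hu : ∀ p : ℝ × ℝ,
      u p = Real.cos ((κ : ℝ) * (m : ℝ) * p.1) * Real.cos ((κ : ℝ) * (n : ℝ) * p.2)) :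
    (∀ p : ℝ × ℝ, a₁ * dX (dX u) p + a₂ * dY (dY u) p + k2 * q₀ * u p = 0) ∧
    (∀ p : ℝ × ℝ, dX (dX u) p + dY (dY u) p + k2 * u p = 0) ∧
    (∀ p : ℝ × ℝ, (p.1 = 0 ∨ p.1 = Real.pi) → dX u p = 0) ∧
    (∀ p : ℝ × ℝ, (p.2 = 0 ∨ p.2 = Real.pi) → dY u p = 0) :=
  stmt_12_general a₁ a₂ q₀ m n hrel κ k2 hk2 u hu
end

section
/- Let a₂, q₀ be positive reals with (q₀ − 1)(a₂ − 1) > 0, let m be a positive natural number, set k = m·√((a₂ − 1)/(q₀ − 1)), and let b ∈ ℂ satisfy b² = k² − m². For any constants c₁, c₂ ∈ ℂ define u : ℝ² → ℂ by u(x, y) = (c₁·cos(b·x) + c₂·sin(b·x))·cos(m·y), using the complex cosine and sine. Then: (i) ∂²u/∂x² + a₂·∂²u/∂y² + k²·q₀·u = 0 at every point of ℝ²; (ii) ∂²u/∂x² + ∂²u/∂y² + k²·u = 0 at every point of ℝ²; (iii) ∂u/∂y(x, y) = 0 whenever y ∈ {0, π}. -/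
/-- Partial derivative in the first coordinate direction on `ℝ²`, for a
complex-valued function. -/
noncomputable def dXc (u : ℝ × ℝ → ℂ) (p : ℝ × ℝ) : ℂ := fderiv ℝ u p (1, 0)

/-- Partial derivative in the second coordinate direction on `ℝ²`, for a
complex-valued function. -/
noncomputable def dYc (u : ℝ × ℝ → ℂ) (p : ℝ × ℝ) : ℂ := fderiv ℝ u p (0, 1)

/-!
The function `u` separates as `f(x) g(y)`, where `f` and `g` solve `f'' = -b² f` and
`g'' = -m² g`; hence `∂²u/∂x² = -b² u` and `∂²u/∂y² = -m² u`. Both Helmholtz equations then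
reduce to scalar identities: `b² = k² - m²` for the isotropic one, and additionally
`k² (q₀ - 1) = m² (a₂ - 1)`, which is how `k` was chosen, for the anisotropic one. Finally
`∂u/∂y` carries the factor `sin (m y)`, which vanishes at `y = 0` and `y = π`.
-/

open Complex

section Separable

variable {f g : ℝ → ℂ} {f' g' : ℂ} {p : ℝ × ℝ}

theorem hasFDerivAt_mul_separable (hf : HasDerivAt f f' p.1) (hg : HasDerivAt g g' p.2) :
    HasFDerivAt (fun q : ℝ × ℝ => f q.1 * g q.2)
      (f p.1 • (ContinuousLinearMap.toSpanSingleton ℝ g').comp (ContinuousLinearMap.snd ℝ ℝ ℝ) +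
        g p.2 • (ContinuousLinearMap.toSpanSingleton ℝ f').comp (ContinuousLinearMap.fst ℝ ℝ ℝ))
      p :=
  (hf.hasFDerivAt.comp p hasFDerivAt_fst).mul (hg.hasFDerivAt.comp p hasFDerivAt_snd)

theorem dXc_mul_separable (hf : HasDerivAt f f' p.1) (hg : HasDerivAt g g' p.2) :
    dXc (fun q => f q.1 * g q.2) p = f' * g p.2 := by
  simp [dXc, (hasFDerivAt_mul_separable hf hg).fderiv, mul_comm]

theorem dYc_mul_separable (hf : HasDerivAt f f' p.1) (hg : HasDerivAt g g' p.2) :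
    dYc (fun q => f q.1 * g q.2) p = f p.1 * g' := by
  simp [dYc, (hasFDerivAt_mul_separable hf hg).fderiv]

end Separable

/-- The general solution `c₁ cos (b x) + c₂ sin (b x)` of `f'' = -b² f`. -/
noncomputable def trigSol (b c₁ c₂ : ℂ) (x : ℝ) : ℂ :=
  c₁ * cos (b * x) + c₂ * sin (b * x)

section TrigSol

variable (b c₁ c₂ : ℂ)

theorem hasDerivAt_trigSol (x : ℝ) :
    HasDerivAt (trigSol b c₁ c₂) (trigSol b (b * c₂) (-(b * c₁)) x) x := by
  have hlin : HasDerivAt (fun z : ℂ => b * z) b x := by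
    simpa using (hasDerivAt_id (x : ℂ)).const_mul b
  have hcos := (hasDerivAt_cos (b * x)).comp (x : ℂ) hlin
  have hsin := (hasDerivAt_sin (b * x)).comp (x : ℂ) hlin
  convert ((hcos.const_mul c₁).add (hsin.const_mul c₂)).comp_ofReal using 1
  · rfl
  · simp only [trigSol]
    ring

theorem trigSol_one_zero (x : ℝ) : trigSol b 1 0 x = cos (b * x) := by
  simp [trigSol]

end TrigSol

section SeparableTrig

variable (b c₁ c₂ β d₁ d₂ : ℂ)

noncomputable def trigSolProd (q : ℝ × ℝ) : ℂ :=
  trigSol b c₁ c₂ q.1 * trigSol β d₁ d₂ q.2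

theorem dXc_trigSolProd (p : ℝ × ℝ) :
    dXc (trigSolProd b c₁ c₂ β d₁ d₂) p = trigSolProd b (b * c₂) (-(b * c₁)) β d₁ d₂ p :=
  dXc_mul_separable (hasDerivAt_trigSol ..) (hasDerivAt_trigSol ..)

theorem dYc_trigSolProd (p : ℝ × ℝ) :
    dYc (trigSolProd b c₁ c₂ β d₁ d₂) p = trigSolProd b c₁ c₂ β (β * d₂) (-(β * d₁)) p :=
  dYc_mul_separable (hasDerivAt_trigSol ..) (hasDerivAt_trigSol ..)

theorem dXc_dXc_trigSolProd (p : ℝ × ℝ) :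
    dXc (dXc (trigSolProd b c₁ c₂ β d₁ d₂)) p = -b ^ 2 * trigSolProd b c₁ c₂ β d₁ d₂ p := by
  rw [funext (dXc_trigSolProd b c₁ c₂ β d₁ d₂), dXc_trigSolProd]
  simp only [trigSolProd, trigSol]
  ring

theorem dYc_dYc_trigSolProd (p : ℝ × ℝ) :
    dYc (dYc (trigSolProd b c₁ c₂ β d₁ d₂)) p = -β ^ 2 * trigSolProd b c₁ c₂ β d₁ d₂ p := by
  rw [funext (dYc_trigSolProd b c₁ c₂ β d₁ d₂), dYc_trigSolProd]
  simp only [trigSolProd, trigSol]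
  ring

end SeparableTrig

theorem sq_mul_sqrt_div_mul {A B : ℝ} (hAB : 0 < B * A) (c : ℝ) :
    (c * Real.sqrt (A / B)) ^ 2 * B = c ^ 2 * A := by
  have hdiv : 0 < A / B := by
    rcases mul_pos_iff.mp hAB with ⟨hB, hA⟩ | ⟨hB, hA⟩
    exacts [div_pos hA hB, div_pos_of_neg_of_neg hA hB]
  have hB : B ≠ 0 := by rintro rfl; simp at hAB
  rw [mul_pow, Real.sq_sqrt hdiv.le]
  field_simp

theorem stmt_13_general (a₂ q₀ : ℝ)
    (hsign : (q₀ - 1) * (a₂ - 1) > 0)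
    (m : ℕ) (k : ℝ)
    (hk : k = (m : ℝ) * Real.sqrt ((a₂ - 1) / (q₀ - 1)))
    (b : ℂ) (hb : b ^ 2 = (k : ℂ) ^ 2 - (m : ℂ) ^ 2)
    (c₁ c₂ : ℂ) (u : ℝ × ℝ → ℂ)
    (hu : ∀ p : ℝ × ℝ,
      u p = (c₁ * Complex.cos (b * (p.1 : ℂ)) + c₂ * Complex.sin (b * (p.1 : ℂ))) *
        Complex.cos ((m : ℂ) * (p.2 : ℂ))) :
    (∀ p : ℝ × ℝ,
      dXc (dXc u) p + (a₂ : ℂ) * dYc (dYc u) p + ((k : ℂ) ^ 2 * (q₀ : ℂ)) * u p = 0) ∧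
    (∀ p : ℝ × ℝ, dXc (dXc u) p + dYc (dYc u) p + (k : ℂ) ^ 2 * u p = 0) ∧
    (∀ p : ℝ × ℝ, (p.2 = 0 ∨ p.2 = Real.pi) → dYc u p = 0) := by
  obtain rfl : u = trigSolProd b c₁ c₂ m 1 0 := funext fun p => by
    rw [hu, trigSolProd, trigSol_one_zero, trigSol]
  have hkq : (k : ℂ) ^ 2 * (q₀ - 1) = (m : ℂ) ^ 2 * (a₂ - 1) := by
    exact_mod_cast hk ▸ sq_mul_sqrt_div_mul hsign (m : ℝ)
  refine ⟨fun p => ?_, fun p => ?_, fun p hp => ?_⟩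
  · rw [dXc_dXc_trigSolProd, dYc_dYc_trigSolProd]
    linear_combination trigSolProd b c₁ c₂ m 1 0 p * (hkq - hb)
  · rw [dXc_dXc_trigSolProd, dYc_dYc_trigSolProd]
    linear_combination (-trigSolProd b c₁ c₂ m 1 0 p) * hb
  · have hsin : sin ((m : ℂ) * p.2) = 0 := by
      rcases hp with h | h <;> simp [h, Complex.sin_nat_mul_pi]
    simp [dYc_trigSolProd, trigSolProd, trigSol, hsin]

theorem stmt_13 (a₂ q₀ : ℝ) (ha₂ : 0 < a₂) (hq₀ : 0 < q₀)
    (hsign : (q₀ - 1) * (a₂ - 1) > 0)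
    (m : ℕ) (hm : 0 < m) (k : ℝ)
    (hk : k = (m : ℝ) * Real.sqrt ((a₂ - 1) / (q₀ - 1)))
    (b : ℂ) (hb : b ^ 2 = (k : ℂ) ^ 2 - (m : ℂ) ^ 2)
    (c₁ c₂ : ℂ) (u : ℝ × ℝ → ℂ)
    (hu : ∀ p : ℝ × ℝ,
      u p = (c₁ * Complex.cos (b * (p.1 : ℂ)) + c₂ * Complex.sin (b * (p.1 : ℂ))) *
        Complex.cos ((m : ℂ) * (p.2 : ℂ))) :
    (∀ p : ℝ × ℝ,
      dXc (dXc u) p + (a₂ : ℂ) * dYc (dYc u) p + ((k : ℂ) ^ 2 * (q₀ : ℂ)) * u p = 0) ∧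
    (∀ p : ℝ × ℝ, dXc (dXc u) p + dYc (dYc u) p + (k : ℂ) ^ 2 * u p = 0) ∧
    (∀ p : ℝ × ℝ, (p.2 = 0 ∨ p.2 = Real.pi) → dYc u p = 0) :=
  stmt_13_general a₂ q₀ hsign m k hk b hb c₁ c₂ u hu
end

section
/- Let d ≥ 1, let e ∈ ℝᵈ with ‖e‖ = 1, let k, c₁, c₂ ∈ ℝ, and define v : ℝᵈ → ℝ by v(x) = c₁·cos(k·⟨x, e⟩) + c₂·sin(k·⟨x, e⟩). Let A : ℝᵈ → (ℝᵈ →L[ℝ] ℝᵈ) be any family of linear maps satisfying A(x)(e) = e for every x ∈ ℝᵈ. Then: (i) A(x)(∇v(x)) = ∇v(x) for every x ∈ ℝᵈ; (ii) consequently, the vector field F(x) := A(x)(∇v(x)) is differentiable and its divergence satisfies div F(x) + k²·v(x) = 0 for every x ∈ ℝᵈ, where div F = ∑ᵢ ∂ᵢFᵢ. In other words, v solves div(A∇v) + k²·v = 0 on all of ℝᵈ. -/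
/-!
Since `A(x)` fixes `e` and `∇v(x)` is a multiple of `e`, the field `A∇v` is just `∇v`, so
`div(A∇v) = Δv`. For a plane wave `v(x) = f(⟪x, e⟫)` one has `Δv(x) = f''(⟪x, e⟫) ‖e‖²`,
and the profile `f(t) = c₁ cos(kt) + c₂ sin(kt)` satisfies `f'' = -k² f`.
-/

open RealInnerProductSpace

section PlaneWave

variable {E : Type*} [NormedAddCommGroup E] [InnerProductSpace ℝ E]

theorem hasFDerivAt_comp_inner {f : ℝ → ℝ} {f' : ℝ} {e x : E}
    (hf : HasDerivAt f f' ⟪x, e⟫) :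
    HasFDerivAt (fun z => f ⟪z, e⟫) (f' • innerSL ℝ e) x := by
  have hinner : HasFDerivAt (fun z : E => ⟪z, e⟫) (innerSL ℝ e) x := by
    convert (innerSL ℝ e).hasFDerivAt using 1
    exact funext fun z => real_inner_comm e z
  exact hf.comp_hasFDerivAt x hinner

theorem hasGradientAt_comp_inner [CompleteSpace E] {f : ℝ → ℝ} {f' : ℝ} {e x : E}
    (hf : HasDerivAt f f' ⟪x, e⟫) :
    HasGradientAt (fun z => f ⟪z, e⟫) (f' • e) x := by
  rw [hasGradientAt_iff_hasFDerivAt, map_smul]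
  exact hasFDerivAt_comp_inner hf

end PlaneWave

theorem sum_fderiv_smul_comp_inner {d : ℕ} {g : ℝ → ℝ} {g' : ℝ}
    {e x : EuclideanSpace ℝ (Fin d)} (hg : HasDerivAt g g' ⟪x, e⟫) :
    ∑ i, fderiv ℝ (fun z => (g ⟪z, e⟫ • e) i) x (EuclideanSpace.single i 1) = g' * ‖e‖ ^ 2 := by
  have hcoord : ∀ i, fderiv ℝ (fun z => (g ⟪z, e⟫ • e) i) x (EuclideanSpace.single i 1)
      = g' * e i * e i := by
    intro i
    change fderiv ℝ (fun z => g ⟪z, e⟫ * e i) x _ = _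
    rw [((hasFDerivAt_comp_inner hg).mul_const (e i)).fderiv]
    simp only [smul_apply, coe_innerSL_apply,
      EuclideanSpace.inner_single_right, Real.ringHom_apply, one_mul, smul_eq_mul]
    ring
  rw [Finset.sum_congr rfl fun i _ => hcoord i, ← real_inner_self_eq_norm_sq,
    EuclideanSpace.inner_eq_star_dotProduct]
  simp [dotProduct, Finset.mul_sum, mul_assoc]

noncomputable def harmonicProfile (k c₁ c₂ t : ℝ) : ℝ :=
  c₁ * Real.cos (k * t) + c₂ * Real.sin (k * t)

theorem hasDerivAt_harmonicProfile (k c₁ c₂ t : ℝ) :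
    HasDerivAt (harmonicProfile k c₁ c₂) (k * harmonicProfile k c₂ (-c₁) t) t := by
  have hkt : HasDerivAt (fun t => k * t) k t := by
    simpa using (hasDerivAt_id t).const_mul k
  have h := (((Real.hasDerivAt_cos (k * t)).comp t hkt).const_mul c₁).add
    (((Real.hasDerivAt_sin (k * t)).comp t hkt).const_mul c₂)
  exact h.congr_deriv (by simp only [harmonicProfile]; ring)

theorem harmonicProfile_neg (k c₁ c₂ t : ℝ) :
    harmonicProfile k (-c₁) (-c₂) t = -harmonicProfile k c₁ c₂ t := by
  simp only [harmonicProfile]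
  ring

theorem stmt_14_general {d : ℕ}
    (e : EuclideanSpace ℝ (Fin d)) (he : ‖e‖ = 1)
    (k c₁ c₂ : ℝ) (v : EuclideanSpace ℝ (Fin d) → ℝ)
    (hv : ∀ x, v x = c₁ * Real.cos (k * ⟪x, e⟫) + c₂ * Real.sin (k * ⟪x, e⟫))
    (A : EuclideanSpace ℝ (Fin d) →
      (EuclideanSpace ℝ (Fin d) →L[ℝ] EuclideanSpace ℝ (Fin d)))
    (hA : ∀ x, A x e = e) :
    (∀ x, A x (gradient v x) = gradient v x) ∧
    Differentiable ℝ (fun x => A x (gradient v x)) ∧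
    (∀ x, (∑ i, fderiv ℝ (fun z => A z (gradient v z) i) x (EuclideanSpace.single i 1)) +
      k ^ 2 * v x = 0) := by
  set f' := fun t => k * harmonicProfile k c₂ (-c₁) t
  have hv_eq : v = fun x => harmonicProfile k c₁ c₂ ⟪x, e⟫ := funext hv
  have hgrad : ∀ x, gradient v x = f' ⟪x, e⟫ • e := fun x => by
    rw [hv_eq]
    exact (hasGradientAt_comp_inner (hasDerivAt_harmonicProfile k c₁ c₂ _)).gradient
  have hfix : ∀ x, A x (gradient v x) = gradient v x := fun x => by
    rw [hgrad, map_smul, hA]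
  have hF : ∀ x, A x (gradient v x) = f' ⟪x, e⟫ • e := fun x => (hfix x).trans (hgrad x)
  have hf'_deriv : ∀ t, HasDerivAt f' (k * (k * harmonicProfile k (-c₁) (-c₂) t)) t := fun t =>
    (hasDerivAt_harmonicProfile k c₂ (-c₁) t).const_mul k
  refine ⟨hfix, ?_, fun x => ?_⟩
  · simp only [hF]
    exact fun x => ((hasFDerivAt_comp_inner (hf'_deriv _)).differentiableAt).smul_const e
  · simp only [hF]
    rw [sum_fderiv_smul_comp_inner (hf'_deriv _), he, harmonicProfile_neg, hv_eq]
    ring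

theorem stmt_14 {d : ℕ} (hd : 1 ≤ d)
    (e : EuclideanSpace ℝ (Fin d)) (he : ‖e‖ = 1)
    (k c₁ c₂ : ℝ) (v : EuclideanSpace ℝ (Fin d) → ℝ)
    (hv : ∀ x, v x = c₁ * Real.cos (k * ⟪x, e⟫) + c₂ * Real.sin (k * ⟪x, e⟫))
    (A : EuclideanSpace ℝ (Fin d) →
      (EuclideanSpace ℝ (Fin d) →L[ℝ] EuclideanSpace ℝ (Fin d)))
    (hA : ∀ x, A x e = e) :
    (∀ x, A x (gradient v x) = gradient v x) ∧
    Differentiable ℝ (fun x => A x (gradient v x)) ∧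
    (∀ x, (∑ i, fderiv ℝ (fun z => A z (gradient v z) i) x (EuclideanSpace.single i 1)) +
      k ^ 2 * v x = 0) :=
  stmt_14_general e he k c₁ c₂ v hv A hA
end

section
/- Let d ≥ 1, let b₁ < b₂ be reals, let m be a positive natural number, set k = mπ/(b₂ − b₁), let a₀ > 0, and define v : ℝᵈ → ℝ by v(x) = cos(k·(x₁ − b₁)), where x₁ is the first coordinate of x. Let A : ℝᵈ → (ℝᵈ →L[ℝ] ℝᵈ) be any family of linear maps satisfying A(x)(e₁) = a₀·e₁ for every x, where e₁ is the first standard basis vector. Then: (i) Δv + k²·v = 0 on ℝᵈ; (ii) A(x)(∇v(x)) = a₀·∇v(x) for every x, and the vector field F(x) := A(x)(∇v(x)) satisfies div F(x) + k²·a₀·v(x) = 0 for every x ∈ ℝᵈ; (iii) ∂v/∂x₁(x) = 0 whenever x₁ = b₁ or x₁ = b₂. -/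
/-! Since `v` depends on `x₁` only, every derivative reduces to one variable: `∇v = v'(x₁) e₁`
and `Δv = v''(x₁)`. As `e₁` is an eigenvector of every `A x`, also `A ∇v = a₀ ∇v` and
`div (A ∇v) = a₀ v''(x₁)`. Finally `v'' = -k² v`, and `v'(x₁) = -k sin (k (x₁ - b₁))` vanishes at
`x₁ = b₁` and at `x₁ = b₂`, where `k (b₂ - b₁) = m π`. -/

open EuclideanSpace Real

theorem map_single_eq_smul_of_map_single_one {ι : Type*} [DecidableEq ι] {i : ι}
    (L : EuclideanSpace ℝ ι →L[ℝ] EuclideanSpace ℝ ι) {a : ℝ}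
    (hL : L (single i 1) = a • single i 1) (c : ℝ) : L (single i c) = a • single i c := by
  have hsingle : single i c = c • (single i 1 : EuclideanSpace ℝ ι) := by
    ext j
    simp [PiLp.single_apply]
  rw [hsingle, map_smul, hL, smul_comm]

section CoordinateFunctions

variable {ι : Type*} [Fintype ι] {f : ℝ → ℝ} {i : ι} {x : EuclideanSpace ℝ ι}

theorem hasFDerivAt_comp_apply {f' : ℝ} (hf : HasDerivAt f f' (x i)) :
    HasFDerivAt (fun y : EuclideanSpace ℝ ι => f (y i)) (f' • proj (𝕜 := ℝ) i) x :=
  hf.comp_hasFDerivAt x (proj (𝕜 := ℝ) i).hasFDerivAt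

variable [DecidableEq ι]

theorem hasGradientAt_comp_apply {f' : ℝ} (hf : HasDerivAt f f' (x i)) :
    HasGradientAt (fun y : EuclideanSpace ℝ ι => f (y i)) (single i f') x := by
  have hdual : InnerProductSpace.toDual ℝ _ (single i f') = f' • proj (𝕜 := ℝ) i := by
    ext y
    simp [inner_single_left]
  rw [hasGradientAt_iff_hasFDerivAt, hdual]
  exact hasFDerivAt_comp_apply hf

theorem fderiv_comp_apply_single (hf : DifferentiableAt ℝ f (x i)) (j : ι) :
    fderiv ℝ (fun y : EuclideanSpace ℝ ι => f (y i)) x (single j 1) =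
      single i (deriv f (x i)) j := by
  rw [(hasFDerivAt_comp_apply hf.hasDerivAt).fderiv]
  simp [PiLp.single_apply, eq_comm]

theorem sum_fderiv_single_comp_apply (hf : DifferentiableAt ℝ f (x i)) :
    ∑ j, fderiv ℝ (fun y : EuclideanSpace ℝ ι => single i (f (y i)) j) x (single j 1) =
      deriv f (x i) := by
  rw [Finset.sum_eq_single_of_mem i (Finset.mem_univ i)]
  · simpa using fderiv_comp_apply_single hf i
  · intro j _ hj
    simp [hj]

theorem gradient_comp_apply (hf : DifferentiableAt ℝ f (x i)) :
    gradient (fun y : EuclideanSpace ℝ ι => f (y i)) x = single i (deriv f (x i)) :=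
  (hasGradientAt_comp_apply hf.hasDerivAt).gradient

theorem sum_fderiv_map_gradient_comp_apply
    (A : EuclideanSpace ℝ ι → EuclideanSpace ℝ ι →L[ℝ] EuclideanSpace ℝ ι) {a : ℝ}
    (hA : ∀ z, A z (single i 1) = a • single i 1) (hf : Differentiable ℝ f)
    (hf' : DifferentiableAt ℝ (deriv f) (x i)) :
    ∑ j, fderiv ℝ (fun z => A z (gradient (fun y => f (y i)) z) j) x (single j 1) =
      a * deriv (deriv f) (x i) := by
  have hflux (z : EuclideanSpace ℝ ι) (j : ι) :
      A z (gradient (fun y => f (y i)) z) j = single i (a * deriv f (z i)) j := by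
    rw [gradient_comp_apply (hf _), map_single_eq_smul_of_map_single_one _ (hA z)]
    simp [PiLp.single_apply]
  simp_rw [hflux]
  rw [sum_fderiv_single_comp_apply (hf'.const_mul a), deriv_const_mul _ hf']

end CoordinateFunctions

theorem lapl_comp_apply {d : ℕ} {f : ℝ → ℝ} {i : Fin d} {x : EuclideanSpace ℝ (Fin d)}
    (hf : Differentiable ℝ f) (hf' : DifferentiableAt ℝ (deriv f) (x i)) :
    lapl (fun y => f (y i)) x = deriv (deriv f) (x i) := by
  unfold lapl
  simp_rw [fderiv_comp_apply_single (hf _)]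
  exact sum_fderiv_single_comp_apply hf'

theorem hasDerivAt_sin_mul_sub (k b t : ℝ) :
    HasDerivAt (fun t => sin (k * (t - b))) (k * cos (k * (t - b))) t := by
  simpa [mul_comm] using (((hasDerivAt_id t).sub_const b).const_mul k).sin

theorem hasDerivAt_cos_mul_sub (k b t : ℝ) :
    HasDerivAt (fun t => cos (k * (t - b))) (-(k * sin (k * (t - b)))) t := by
  simpa [mul_comm] using (((hasDerivAt_id t).sub_const b).const_mul k).cos

theorem deriv_cos_mul_sub (k b : ℝ) :
    deriv (fun t => cos (k * (t - b))) = fun t => -(k * sin (k * (t - b))) :=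
  funext fun t => (hasDerivAt_cos_mul_sub k b t).deriv

theorem deriv_deriv_cos_mul_sub (k b : ℝ) :
    deriv (deriv fun t => cos (k * (t - b))) = fun t => -(k ^ 2 * cos (k * (t - b))) := by
  rw [deriv_cos_mul_sub]
  funext t
  exact ((hasDerivAt_sin_mul_sub k b t).const_mul k).neg.deriv.trans (by ring)

theorem stmt_15_general {d : ℕ} (hd : 0 < d) (b₁ b₂ : ℝ) (hb : b₁ < b₂)
    (m : ℕ) (k : ℝ) (hk : k = (m : ℝ) * Real.pi / (b₂ - b₁))
    (a₀ : ℝ)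
    (v : EuclideanSpace ℝ (Fin d) → ℝ)
    (hv : ∀ x, v x = Real.cos (k * (x ⟨0, hd⟩ - b₁)))
    (A : EuclideanSpace ℝ (Fin d) →
      (EuclideanSpace ℝ (Fin d) →L[ℝ] EuclideanSpace ℝ (Fin d)))
    (hA : ∀ x, A x (EuclideanSpace.single (⟨0, hd⟩ : Fin d) 1) =
      a₀ • EuclideanSpace.single (⟨0, hd⟩ : Fin d) 1) :
    (∀ x, lapl v x + k ^ 2 * v x = 0) ∧
    (∀ x, A x (gradient v x) = a₀ • gradient v x) ∧
    (∀ x, (∑ i, fderiv ℝ (fun z => A z (gradient v z) i) x (EuclideanSpace.single i 1)) +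
      k ^ 2 * a₀ * v x = 0) ∧
    (∀ x : EuclideanSpace ℝ (Fin d), (x ⟨0, hd⟩ = b₁ ∨ x ⟨0, hd⟩ = b₂) →
      fderiv ℝ v x (EuclideanSpace.single (⟨0, hd⟩ : Fin d) 1) = 0) := by
  have hvf : v = fun y => cos (k * (y ⟨0, hd⟩ - b₁)) := funext hv
  have hf : Differentiable ℝ fun t => cos (k * (t - b₁)) :=
    fun t => (hasDerivAt_cos_mul_sub k b₁ t).differentiableAt
  have hf' : Differentiable ℝ (deriv fun t => cos (k * (t - b₁))) := by
    rw [deriv_cos_mul_sub]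
    exact fun t => ((hasDerivAt_sin_mul_sub k b₁ t).const_mul k).neg.differentiableAt
  refine ⟨fun x => ?_, fun x => ?_, fun x => ?_, fun x hx => ?_⟩
  · rw [hvf, lapl_comp_apply hf (hf' _), deriv_deriv_cos_mul_sub]
    ring
  · rw [hvf, gradient_comp_apply (hf _), map_single_eq_smul_of_map_single_one _ (hA x)]
  · rw [hvf, sum_fderiv_map_gradient_comp_apply A hA hf (hf' _), deriv_deriv_cos_mul_sub]
    ring
  · have hsin : sin (k * (x ⟨0, hd⟩ - b₁)) = 0 := by
      rcases hx with h | h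
      · simp [h]
      · rw [h, hk, div_mul_cancel₀ _ (sub_ne_zero.2 hb.ne')]
        exact sin_nat_mul_pi m
    rw [hvf, fderiv_comp_apply_single (hf _), deriv_cos_mul_sub]
    simp [hsin]

theorem stmt_15 {d : ℕ} (hd : 0 < d) (b₁ b₂ : ℝ) (hb : b₁ < b₂)
    (m : ℕ) (hm : 0 < m) (k : ℝ) (hk : k = (m : ℝ) * Real.pi / (b₂ - b₁))
    (a₀ : ℝ) (ha₀ : 0 < a₀)
    (v : EuclideanSpace ℝ (Fin d) → ℝ)
    (hv : ∀ x, v x = Real.cos (k * (x ⟨0, hd⟩ - b₁)))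
    (A : EuclideanSpace ℝ (Fin d) →
      (EuclideanSpace ℝ (Fin d) →L[ℝ] EuclideanSpace ℝ (Fin d)))
    (hA : ∀ x, A x (EuclideanSpace.single (⟨0, hd⟩ : Fin d) 1) =
      a₀ • EuclideanSpace.single (⟨0, hd⟩ : Fin d) 1) :
    (∀ x, lapl v x + k ^ 2 * v x = 0) ∧
    (∀ x, A x (gradient v x) = a₀ • gradient v x) ∧
    (∀ x, (∑ i, fderiv ℝ (fun z => A z (gradient v z) i) x (EuclideanSpace.single i 1)) +
      k ^ 2 * a₀ * v x = 0) ∧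
    (∀ x : EuclideanSpace ℝ (Fin d), (x ⟨0, hd⟩ = b₁ ∨ x ⟨0, hd⟩ = b₂) →
      fderiv ℝ v x (EuclideanSpace.single (⟨0, hd⟩ : Fin d) 1) = 0) :=
  stmt_15_general hd b₁ b₂ hb m k hk a₀ v hv A hA
end
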